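/- arXiv:2007.04811 — 5 statements merged into one kernel-verified Lean document; each statement's English description precedes it below -/
import Mathlib

section
/- Let (Z, ζ) be a probability space and T: Z → Z a measure-preserving transformation. If f: Z → ℝ is a measurable function such that f - f∘T lies in L¹(Z, ζ), then ∫_Z (f - f∘T) dζ = 0. -/
/-!
Truncating `f` at level `n` gives bounded, hence integrable, functions `fₙ`, for which
`∫ (fₙ - fₙ ∘ T) = 0` by invariance of the measure. Truncation is `1`-Lipschitz, so
`|fₙ - fₙ ∘ T| ≤ |f - f ∘ T|`, and `fₙ → f` pointwise; dominated convergence then passes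
the vanishing of the integral to the limit.
-/

open MeasureTheory Filter Topology

section Truncation

variable {α : Type*} [AddCommGroup α] [LinearOrder α] [IsOrderedAddMonoid α]

def truncate (c x : α) : α := max (min x c) (-c)

lemma abs_truncate_sub_truncate_le (c x y : α) : |truncate c x - truncate c y| ≤ |x - y| :=
  (abs_max_sub_max_le_abs _ _ _).trans <| by
    simpa using (abs_min_sub_min_le_max x c y c).trans (by simp)

lemma truncate_mem_Icc {c : α} (hc : 0 ≤ c) (x : α) : truncate c x ∈ Set.Icc (-c) c :=
  ⟨le_max_right _ _, max_le (min_le_right _ _) (neg_le_self hc)⟩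

lemma truncate_eq_self {c x : α} (hx : |x| ≤ c) : truncate c x = x := by
  rw [truncate, min_eq_left (abs_le.1 hx).2, max_eq_left (abs_le.1 hx).1]

end Truncation

lemma continuous_truncate (c : ℝ) : Continuous (truncate c) := by
  unfold truncate
  fun_prop

lemma tendsto_truncate_natCast_atTop (x : ℝ) :
    Tendsto (fun n : ℕ => truncate (n : ℝ) x) atTop (𝓝 x) :=
  tendsto_atTop_of_eventually_const fun _ hn =>
    truncate_eq_self <| (Nat.le_ceil |x|).trans (Nat.cast_le.2 hn)

lemma MeasureTheory.AEStronglyMeasurable.integrable_truncate {Z : Type*} [MeasurableSpace Z]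
    {μ : Measure Z} [IsFiniteMeasure μ] {f : Z → ℝ} (hf : AEStronglyMeasurable f μ)
    {c : ℝ} (hc : 0 ≤ c) :
    Integrable (fun z => truncate c (f z)) μ :=
  .of_mem_Icc (-c) c ((continuous_truncate c).comp_aestronglyMeasurable hf).aemeasurable
    (ae_of_all _ fun z => truncate_mem_Icc hc (f z))

lemma MeasureTheory.MeasurePreserving.integral_sub_comp_eq_zero {Z : Type*} [MeasurableSpace Z]
    {μ : Measure Z} {T : Z → Z} (hT : MeasurePreserving T μ μ) {g : Z → ℝ}
    (hg : Integrable g μ) : ∫ z, (g z - g (T z)) ∂μ = 0 := by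
  have hg_comp : ∫ z, g (T z) ∂μ = ∫ z, g z ∂μ := by
    rw [← integral_map hT.measurable.aemeasurable (hT.map_eq.symm ▸ hg.aestronglyMeasurable),
      hT.map_eq]
  have hg_comp_int : Integrable (fun z => g (T z)) μ :=
    (hT.integrable_comp hg.aestronglyMeasurable).2 hg
  rw [integral_sub hg hg_comp_int, hg_comp, sub_self]

/-- **Anosov's lemma.** If `T` preserves the probability measure `ζ` and `f - f ∘ T`
is integrable (while `f` itself need not be), then `∫ (f - f ∘ T) dζ = 0`. -/
theorem anosov_integral_sub_comp_eq_zero {Z : Type*} [MeasurableSpace Z]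
    (ζ : Measure Z) [IsProbabilityMeasure ζ] (T : Z → Z)
    (hT : MeasurePreserving T ζ ζ) (f : Z → ℝ) (hf : Measurable f)
    (hint : Integrable (fun z => f z - f (T z)) ζ) :
    ∫ z, (f z - f (T z)) ∂ζ = 0 := by
  set F : ℕ → Z → ℝ := fun n z => truncate (n : ℝ) (f z)
  have hF (n : ℕ) : Integrable (F n) ζ :=
    hf.aestronglyMeasurable.integrable_truncate n.cast_nonneg
  have hlim : Tendsto (fun n => ∫ z, (F n z - F n (T z)) ∂ζ) atTop
      (𝓝 (∫ z, (f z - f (T z)) ∂ζ)) :=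
    tendsto_integral_of_dominated_convergence _
      (fun n => (hF n).aestronglyMeasurable.sub
        ((hF n).aestronglyMeasurable.comp_measurePreserving hT))
      hint.abs (fun n => ae_of_all _ fun z => abs_truncate_sub_truncate_le _ _ _)
      (ae_of_all _ fun z =>
        (tendsto_truncate_natCast_atTop _).sub (tendsto_truncate_natCast_atTop _))
  simp only [fun n => hT.integral_sub_comp_eq_zero (hF n)] at hlim
  exact tendsto_nhds_unique tendsto_const_nhds hlim |>.symm
end

section
/- Let (Z, ζ) be a probability space, T: Z → Z measure-preserving, and f: Z → ℝ measurable with f - f∘T ∈ L¹(ζ). Then the conditional expectation E[f∘T - f | I(T)] = 0 almost everywhere, where I(T) is the σ-algebra of T-invariant measurable sets. -/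
open MeasureTheory

/-- The σ-algebra of `T`-invariant measurable sets. -/
def invariantSigmaAlgebra {Z : Type*} (m : MeasurableSpace Z) (T : Z → Z) :
    MeasurableSpace Z where
  MeasurableSet' s := MeasurableSet[m] s ∧ T ⁻¹' s = s
  measurableSet_empty := ⟨MeasurableSet.empty, rfl⟩
  measurableSet_compl := fun s hs =>
    ⟨hs.1.compl, by rw [Set.preimage_compl, hs.2]⟩
  measurableSet_iUnion := fun s hs =>
    ⟨MeasurableSet.iUnion fun i => (hs i).1, by
      simp only [Set.preimage_iUnion]
      exact Set.iUnion_congr fun i => (hs i).2⟩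

/-- If `T` preserves the probability measure `ζ` and `f - f ∘ T ∈ L¹(ζ)`, then the
conditional expectation of `f ∘ T - f` with respect to the σ-algebra of `T`-invariant
sets vanishes almost everywhere. -/
theorem condexp_comp_sub_self_invariant_eq_zero {Z : Type*} [m : MeasurableSpace Z]
    (ζ : Measure Z) [IsProbabilityMeasure ζ] (T : Z → Z)
    (hT : MeasurePreserving T ζ ζ) (f : Z → ℝ) (hf : Measurable f)
    (hint : Integrable (fun z => f z - f (T z)) ζ) :
    ζ[(fun z => f (T z) - f z)|invariantSigmaAlgebra m T] =ᵐ[ζ] 0 := by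
  have hm : invariantSigmaAlgebra m T ≤ m := fun s hs => hs.1
  have hg_int : Integrable (fun z => f (T z) - f z) ζ := by
    have h : (fun z => f (T z) - f z) = fun z => -(f z - f (T z)) := by
      funext z; ring
    rw [h]; exact hint.neg
  -- truncation at level `M`
  set τ : ℕ → ℝ → ℝ := fun M x => max (min x M) (-(M : ℝ)) with hτdef
  have hτ_lip : ∀ (M : ℕ) (a b : ℝ), |τ M a - τ M b| ≤ |a - b| := by
    intro M a b
    refine le_trans (abs_max_sub_max_le_abs _ _ _) ?_
    refine le_trans (abs_min_sub_min_le_max a (M:ℝ) b (M:ℝ)) ?_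
    simp [abs_nonneg]
  have hτ_bdd : ∀ (M : ℕ) (x : ℝ), |τ M x| ≤ (M : ℝ) := by
    intro M x
    rw [abs_le]
    constructor
    · exact le_max_right _ _
    · exact max_le (le_trans (min_le_right _ _) le_rfl)
        (neg_le_self (by positivity))
  have hτ_meas : ∀ M : ℕ, Measurable (fun z => τ M (f z)) := fun M =>
    (hf.min measurable_const).max measurable_const
  have hτ_intble : ∀ M : ℕ, Integrable (fun z => τ M (f z)) ζ := by
    intro M
    refine (integrable_const (M : ℝ)).mono' (hτ_meas M).aestronglyMeasurable ?_
    exact Filter.Eventually.of_forall fun z => by simpa using hτ_bdd M (f z)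
  have hτ_eq : ∀ (x : ℝ) (M : ℕ), |x| ≤ (M : ℝ) → τ M x = x := by
    intro x M hx
    rw [abs_le] at hx
    simp only [hτdef]
    rw [min_eq_left hx.2, max_eq_left hx.1]
  have key : ∀ s, MeasurableSet[invariantSigmaAlgebra m T] s →
      ∫ z in s, (f (T z) - f z) ∂ζ = 0 := by
    intro s hs
    obtain ⟨hsm, hsT⟩ := hs
    have h1 : ∀ M : ℕ, ∫ z in s, (τ M (f (T z)) - τ M (f z)) ∂ζ = 0 := by
      intro M
      have hcomp : ∫ z in s, τ M (f (T z)) ∂ζ = ∫ z in s, τ M (f z) ∂ζ := by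
        conv_rhs => rw [← hT.map_eq]
        rw [setIntegral_map hsm ((hτ_meas M).aestronglyMeasurable)
          hT.measurable.aemeasurable, hsT]
      have hc : Integrable (fun z => τ M (f (T z))) ζ :=
        (hT.integrable_comp (hτ_meas M).aestronglyMeasurable).2 (hτ_intble M)
      rw [integral_sub hc.integrableOn ((hτ_intble M).integrableOn), hcomp, sub_self]
    have hlim : Filter.Tendsto (fun M : ℕ => ∫ z in s, (τ M (f (T z)) - τ M (f z)) ∂ζ)
        Filter.atTop (nhds (∫ z in s, (f (T z) - f z) ∂ζ)) := by
      refine tendsto_integral_of_dominated_convergence (fun z => |f (T z) - f z|)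
        (fun M => ((hτ_meas M).comp hT.measurable).sub (hτ_meas M)
          |>.aestronglyMeasurable.restrict) (hg_int.abs.integrableOn) ?_ ?_
      · intro M
        exact Filter.Eventually.of_forall fun z => by
          simpa using hτ_lip M (f (T z)) (f z)
      · refine Filter.Eventually.of_forall fun z => ?_
        have : (fun M : ℕ => τ M (f (T z)) - τ M (f z)) =ᶠ[Filter.atTop]
            (fun _ => f (T z) - f z) := by
          obtain ⟨N, hN⟩ := exists_nat_ge (max |f (T z)| |f z|)
          refine Filter.eventually_atTop.2 ⟨N, fun M hM => ?_⟩
          have hMN : (N : ℝ) ≤ (M : ℝ) := Nat.cast_le.2 hM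
          show τ M (f (T z)) - τ M (f z) = f (T z) - f z
          rw [hτ_eq _ M (le_trans (le_trans (le_max_left _ _) hN) hMN),
            hτ_eq _ M (le_trans (le_trans (le_max_right _ _) hN) hMN)]
        exact Filter.Tendsto.congr' this.symm tendsto_const_nhds
    have : Filter.Tendsto (fun _ : ℕ => (0 : ℝ)) Filter.atTop
        (nhds (∫ z in s, (f (T z) - f z) ∂ζ)) := by
      refine hlim.congr fun M => (h1 M)
    exact tendsto_nhds_unique this tendsto_const_nhds
  haveI : SigmaFinite (ζ.trim hm) := inferInstance
  refine (ae_eq_condExp_of_forall_setIntegral_eq hm hg_int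
    (fun s _ _ => integrableOn_zero) (fun s hs _ => by simp [key s hs])
    (StronglyMeasurable.aestronglyMeasurable stronglyMeasurable_zero)).symm
end

section
/- Let p₁,…,p_l be distinct primes. The diagonal embedding ρ of Γ = ℤ[1/p₁,…,1/p_l] ⋊ S into G = (ℚ_{p₁} × ⋯ × ℚ_{p_l}) ⋊ S has dense image, where S = {p₁^{n₁}⋯p_l^{n_l} : n_i ∈ ℤ}. -/
/-!
Multiplying by a power of `m = p₁ ⋯ p_l`, which is a unit of `ℤ[1/p₁,…,1/p_l]` but has norm
`< 1` at every `pᵢ`, moves any point of `∏ ℚ_{pᵢ}` into `∏ ℤ_{pᵢ}`. There the naturals are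
dense by the Chinese remainder theorem, since `ℤ_{pᵢ}` is approximated modulo `pᵢ ^ k` by
`ZMod (pᵢ ^ k)`. Scaling back is continuous, so `ℤ[1/p₁,…,1/p_l]` is dense in `∏ ℚ_{pᵢ}`; the
`ℤ^l` factor is discrete and carried identically.
-/

open scoped Padic

/-- The ring `ℤ[1/p₁, …, 1/p_l]` realized as a subring of `ℚ`. -/
def zInvPrimes {l : ℕ} (p : Fin l → ℕ) : Subring ℚ :=
  Subring.closure (Set.range fun i => ((p i : ℚ))⁻¹)

namespace PadicInt

theorem norm_natCast_sub_le_of_toZModPow_eq {p : ℕ} [Fact p.Prime] {x : ℤ_[p]} {n k : ℕ}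
    (h : (n : ZMod (p ^ k)) = toZModPow k x) : ‖(n : ℤ_[p]) - x‖ ≤ (p : ℝ) ^ (-(k : ℤ)) := by
  rw [norm_le_pow_iff_mem_span_pow, ← ker_toZModPow, RingHom.mem_ker, map_sub, map_natCast, h,
    sub_self]

variable {ι : Type*} {p : ι → ℕ} [∀ i, Fact (p i).Prime]

theorem exists_natCast_norm_sub_le_pi [Fintype ι] (hp : Function.Injective p)
    (x : ∀ i, ℤ_[p i]) (k : ι → ℕ) :
    ∃ n : ℕ, ∀ i, ‖(n : ℤ_[p i]) - x i‖ ≤ (p i : ℝ) ^ (-(k i : ℤ)) := by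
  have coprime : ((Finset.univ : Finset ι) : Set ι).Pairwise
      (Function.onFun Nat.Coprime fun i => p i ^ k i) :=
    fun i _ j _ hij => Nat.Coprime.pow _ _
      ((Nat.coprime_primes Fact.out Fact.out).mpr (hp.ne hij))
  obtain ⟨n, hn⟩ := Nat.chineseRemainderOfFinset (fun i => (toZModPow (k i) (x i)).val)
    (fun i => p i ^ k i) Finset.univ (fun i _ => (NeZero.ne _)) coprime
  refine ⟨n, fun i => norm_natCast_sub_le_of_toZModPow_eq ?_⟩
  rw [(ZMod.natCast_eq_natCast_iff _ _ _).mpr (hn i (Finset.mem_univ i)), ZMod.natCast_zmod_val]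

theorem denseRange_natCast_pi [Fintype ι] (hp : Function.Injective p) :
    DenseRange (fun n : ℕ => fun i => (n : ℤ_[p i])) := by
  rw [Metric.denseRange_iff]
  intro x ε hε
  choose k hk using fun i => exists_pow_neg_lt (p i) hε
  obtain ⟨n, hn⟩ := exists_natCast_norm_sub_le_pi hp x k
  refine ⟨n, (dist_pi_lt_iff hε).mpr fun i => ?_⟩
  rw [dist_eq_norm, norm_sub_rev]
  exact (hn i).trans_lt (hk i)

end PadicInt

theorem Padic.exists_pow_mul_norm_le_one_pi {ι : Type*} [Finite ι] {p : ι → ℕ}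
    [∀ i, Fact (p i).Prime] {m : ℕ} (hm : ∀ i, p i ∣ m) (x : ∀ i, ℚ_[p i]) :
    ∃ n : ℕ, ∀ i, ‖(m : ℚ_[p i]) ^ n * x i‖ ≤ 1 := by
  have small : ∀ i, ∀ᶠ n in Filter.atTop, ‖(m : ℚ_[p i]) ^ n * x i‖ < 1 := by
    intro i
    simp only [norm_mul, norm_pow]
    have hlt : ‖(m : ℚ_[p i])‖ < 1 := Padic.norm_natCast_lt_one_iff.mpr (hm i)
    refine ((tendsto_pow_atTop_nhds_zero_of_lt_one (norm_nonneg _) hlt).mul_const _).eventually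
      (gt_mem_nhds (by rw [zero_mul]; exact one_pos))
  obtain ⟨n, hn⟩ := (Filter.eventually_all.mpr small).exists
  exact ⟨n, fun i => (hn i).le⟩

theorem prod_inv_pow_mem_zInvPrimes {l : ℕ} (p : Fin l → ℕ) (n : ℕ) :
    (((∏ i, p i : ℕ) : ℚ) ^ n)⁻¹ ∈ zInvPrimes p := by
  rw [Nat.cast_prod, ← inv_pow, ← Finset.prod_inv_distrib]
  exact pow_mem (prod_mem fun i _ => Subring.subset_closure (Set.mem_range_self i)) n

theorem denseRange_zInvPrimes {l : ℕ} (p : Fin l → ℕ) [∀ i, Fact (p i).Prime]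
    (hp : Function.Injective p) :
    DenseRange (fun r : zInvPrimes p => fun i => ((r : ℚ) : ℚ_[p i])) := by
  intro x
  set m := ∏ i, p i
  have hm : m ≠ 0 := Finset.prod_ne_zero_iff.mpr fun i _ => (Fact.out : (p i).Prime).ne_zero
  obtain ⟨n, hn⟩ := Padic.exists_pow_mul_norm_le_one_pi
    (fun i => Finset.dvd_prod_of_mem p (Finset.mem_univ i)) x
  set y : ∀ i, ℤ_[p i] := fun i => ⟨(m : ℚ_[p i]) ^ n * x i, hn i⟩
  set scale : (∀ i, ℤ_[p i]) → ∀ i, ℚ_[p i] := fun z i => (((m : ℚ) ^ n)⁻¹ : ℚ) * z i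
  have scale_cont : Continuous scale := by fun_prop
  have scale_y : scale y = x := by
    funext i
    simp only [scale, y, Rat.cast_inv, Rat.cast_pow, Rat.cast_natCast]
    rw [← mul_assoc, inv_mul_cancel₀ (pow_ne_zero _ (Nat.cast_ne_zero.mpr hm)), one_mul]
  have scale_natCast : scale '' Set.range (fun k : ℕ => fun i => (k : ℤ_[p i])) ⊆
      Set.range (fun r : zInvPrimes p => fun i => ((r : ℚ) : ℚ_[p i])) := by
    rintro _ ⟨_, ⟨k, rfl⟩, rfl⟩
    refine ⟨⟨((m : ℚ) ^ n)⁻¹ * k, mul_mem (prod_inv_pow_mem_zInvPrimes p n) (natCast_mem _ k)⟩, ?_⟩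
    funext i
    simp [scale]
  rw [← scale_y]
  refine (image_closure_subset_closure_image scale_cont).trans (closure_mono scale_natCast) ?_
  exact Set.mem_image_of_mem _ (PadicInt.denseRange_natCast_pi hp y)

/-- The diagonal embedding of `Γ = ℤ[1/p₁,…,1/p_l] ⋊ S` into
`G = (ℚ_{p₁} × ⋯ × ℚ_{p_l}) ⋊ S`, where `S = {p₁^{n₁}⋯p_l^{n_l}} ≅ ℤ^l`, has dense
image. -/
theorem denseRange_diagonal_embedding {l : ℕ} (p : Fin l → ℕ)
    [∀ i, Fact (p i).Prime] (hinj : Function.Injective p) :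
    DenseRange (fun g : zInvPrimes p × (Fin l → ℤ) =>
      ((fun i => ((g.1 : ℚ) : ℚ_[p i]), g.2) : (∀ i, ℚ_[p i]) × (Fin l → ℤ))) :=
  (denseRange_zInvPrimes p hinj).prodMap denseRange_id
end

section
/- Let R be a countable ring with 1, S a multiplicative subgroup of R, U an additive subgroup of R with [U : sU ∩ U] < ∞ for all s ∈ S, and Γ = R ⋊ S, Λ = U ⋊ {e}. Given any probability measure κ on R and s ∈ S, let V_s ⊆ R be a finite set of representatives for U/(sU ∩ U) containing 0, and define κ_s(t) := (1/|V_s|) Σ_{v ∈ V_s} κ(t + v). Then κ_s is a probability measure on R satisfying κ_s(u + r + sU) = κ_s(r + sU) for all u ∈ U, r ∈ R, s ∈ S. -/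
open scoped ENNReal

/-- Construction of `Λ`-absorbing measures: if `V` is a finite set of representatives of
`U/(sU ∩ U)` containing `0`, and `κ` is a probability measure on the countable ring `R`,
then `κ_s(t) := |V|⁻¹ Σ_{v ∈ V} κ(t+v)` is a probability measure on `R` which gives equal
mass to the cosets `u + r + sU` and `r + sU` for every `u ∈ U`. -/
theorem averaged_measure_is_absorbing
    {R : Type*} [Ring R] [Countable R] (S : Subgroup Rˣ) (U : AddSubgroup R)
    (κ : R → ℝ≥0∞) (hκ : ∑' t : R, κ t = 1)
    (s : S) (V : Finset R) (h0V : (0 : R) ∈ V) (hVU : (V : Set R) ⊆ (U : Set R))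
    (hrep : ∀ u ∈ U, ∃! v : R, v ∈ V ∧
      (u - v ∈ U ∧ ∃ w ∈ U, u - v = ((s : Rˣ) : R) * w)) :
    (∑' t : R, (V.card : ℝ≥0∞)⁻¹ * ∑ v ∈ V, κ (t + v)) = 1 ∧
    ∀ u ∈ U, ∀ r : R,
      (∑' x : {t : R // ∃ w ∈ U, t = u + r + ((s : Rˣ) : R) * w},
        (V.card : ℝ≥0∞)⁻¹ * ∑ v ∈ V, κ ((x : R) + v)) =
      (∑' x : {t : R // ∃ w ∈ U, t = r + ((s : Rˣ) : R) * w},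
        (V.card : ℝ≥0∞)⁻¹ * ∑ v ∈ V, κ ((x : R) + v)) := by
  have hcard0 : (V.card : ℝ≥0∞) ≠ 0 := by
    exact_mod_cast Nat.cast_ne_zero.mpr (Finset.card_ne_zero_of_mem h0V)
  have htrans : ∀ (g : R → ℝ≥0∞) (v : R), ∑' t : R, g (t + v) = ∑' t : R, g t := by
    intro g v
    simpa using (Equiv.addRight v).tsum_eq g
  constructor
  · rw [ENNReal.tsum_mul_left, Summable.tsum_finsetSum (fun v _ => ENNReal.summable)]
    have h1 : ∀ v ∈ V, ∑' t : R, κ (t + v) = 1 := fun v _ => by rw [htrans]; exact hκ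
    rw [Finset.sum_congr rfl h1, Finset.sum_const, nsmul_eq_mul, mul_one,
      ENNReal.inv_mul_cancel hcard0 (ENNReal.natCast_ne_top _)]
  · intro u hu r
    set σ : R := ((s : Rˣ) : R) with hσ
    have main : ∀ c : R,
        (∀ t : R, (∃ w ∈ U, ∃ a ∈ U, t = c + a + σ * w) ↔
                  (∃ w ∈ U, ∃ a ∈ U, t = r + a + σ * w)) →
        (∑' x : {t : R // ∃ w ∈ U, t = c + σ * w},
            (V.card : ℝ≥0∞)⁻¹ * ∑ v ∈ V, κ ((x : R) + v)) =
        (V.card : ℝ≥0∞)⁻¹ * ∑' t : R,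
            Set.indicator {t : R | ∃ w ∈ U, ∃ a ∈ U, t = r + a + σ * w} κ t := by
      intro c hc
      rw [ENNReal.tsum_mul_left]
      congr 1
      have step : ∀ v ∈ V, (∑' x : {t : R // ∃ w ∈ U, t = c + σ * w}, κ ((x : R) + v))
          = ∑' t : R, Set.indicator {t : R | ∃ w ∈ U, t = c + v + σ * w} κ t := by
        intro v hv
        have e1 : (∑' x : {t : R // ∃ w ∈ U, t = c + σ * w}, κ ((x : R) + v))
            = ∑' t : R, Set.indicator {t : R | ∃ w ∈ U, t = c + σ * w}
                (fun t => κ (t + v)) t :=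
          tsum_subtype {t : R | ∃ w ∈ U, t = c + σ * w} (fun t => κ (t + v))
        have e2 : ∀ t : R, Set.indicator {t : R | ∃ w ∈ U, t = c + σ * w}
            (fun t => κ (t + v)) t
            = Set.indicator {t : R | ∃ w ∈ U, t = c + v + σ * w} κ (t + v) := by
          intro t
          by_cases h : t ∈ {t : R | ∃ w ∈ U, t = c + σ * w}
          · rw [Set.indicator_of_mem h]
            obtain ⟨w, hw, ht⟩ := h
            have hmem : t + v ∈ {t : R | ∃ w ∈ U, t = c + v + σ * w} :=
              ⟨w, hw, by rw [ht]; abel⟩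
            rw [Set.indicator_of_mem hmem]
          · have hnm : t + v ∉ {t : R | ∃ w ∈ U, t = c + v + σ * w} := by
              rintro ⟨w, hw, ht⟩
              refine h ⟨w, hw, ?_⟩
              apply add_right_cancel (b := v)
              rw [ht]; abel
            rw [Set.indicator_of_notMem h, Set.indicator_of_notMem hnm]
        rw [e1, tsum_congr e2,
          htrans (Set.indicator {t : R | ∃ w ∈ U, t = c + v + σ * w} κ) v]
      have key : ∀ t : R,
          (∑ v ∈ V, Set.indicator {t : R | ∃ w ∈ U, t = c + v + σ * w} κ t)
          = Set.indicator {t : R | ∃ w ∈ U, ∃ a ∈ U, t = r + a + σ * w} κ t := by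
        intro t
        by_cases hQ : ∃ w ∈ U, ∃ a ∈ U, t = c + a + σ * w
        · obtain ⟨w₀, hw₀, a, ha, hta⟩ := hQ
          obtain ⟨v₀, ⟨hv₀V, -, w', hw', hvw'⟩, huniq⟩ := hrep a ha
          have hmemQ : t ∈ {t : R | ∃ w ∈ U, ∃ a ∈ U, t = r + a + σ * w} :=
            (hc t).mp ⟨w₀, hw₀, a, ha, hta⟩
          rw [Set.indicator_of_mem hmemQ, Finset.sum_eq_single_of_mem v₀ hv₀V ?_]
          · have hmem : t ∈ {t : R | ∃ w ∈ U, t = c + v₀ + σ * w} :=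
              ⟨w' + w₀, U.add_mem hw' hw₀, by rw [hta, mul_add, ← hvw']; abel⟩
            rw [Set.indicator_of_mem hmem]
          · intro v hvV hne
            apply Set.indicator_of_notMem
            rintro ⟨w₁, hw₁, ht₁⟩
            apply hne
            refine huniq v ⟨hvV, U.sub_mem ha (hVU hvV), w₁ - w₀, U.sub_mem hw₁ hw₀, ?_⟩
            rw [mul_sub]
            have h0 : c + a + σ * w₀ = c + v + σ * w₁ := by rw [← hta, ← ht₁]
            have h1 : a + σ * w₀ = v + σ * w₁ := by
              rwa [add_assoc, add_assoc, add_right_inj] at h0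
            rw [sub_eq_sub_iff_add_eq_add, h1]
            exact add_comm _ _
        · have hQr : t ∉ {t : R | ∃ w ∈ U, ∃ a ∈ U, t = r + a + σ * w} :=
            fun h => hQ ((hc t).mpr h)
          rw [Set.indicator_of_notMem hQr]
          refine Finset.sum_eq_zero fun v hv => ?_
          apply Set.indicator_of_notMem
          rintro ⟨w, hw, htw⟩
          exact hQ ⟨w, hw, v, hVU hv, htw⟩
      calc (∑' x : {t : R // ∃ w ∈ U, t = c + σ * w}, ∑ v ∈ V, κ ((x : R) + v))
          = ∑ v ∈ V, ∑' x : {t : R // ∃ w ∈ U, t = c + σ * w}, κ ((x : R) + v) :=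
            Summable.tsum_finsetSum (fun v _ => ENNReal.summable)
        _ = ∑ v ∈ V, ∑' t : R, Set.indicator {t : R | ∃ w ∈ U, t = c + v + σ * w} κ t :=
            Finset.sum_congr rfl step
        _ = ∑' t : R, ∑ v ∈ V, Set.indicator {t : R | ∃ w ∈ U, t = c + v + σ * w} κ t :=
            (Summable.tsum_finsetSum (fun v _ => ENNReal.summable)).symm
        _ = ∑' t : R, Set.indicator {t : R | ∃ w ∈ U, ∃ a ∈ U, t = r + a + σ * w} κ t :=
            tsum_congr key
    have hc1 : ∀ t : R, (∃ w ∈ U, ∃ a ∈ U, t = u + r + a + σ * w) ↔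
        (∃ w ∈ U, ∃ a ∈ U, t = r + a + σ * w) := by
      intro t
      constructor
      · rintro ⟨w, hw, a, ha, rfl⟩
        exact ⟨w, hw, u + a, U.add_mem hu ha, by abel⟩
      · rintro ⟨w, hw, a, ha, rfl⟩
        exact ⟨w, hw, a - u, U.sub_mem ha hu, by abel⟩
    rw [main (u + r) hc1, main r (fun t => Iff.rfl)]
end

section
/- Let R be a countable ring with 1, S ≤ R a multiplicative subgroup, U an additive subgroup of R with [U : sU ∩ U] < ∞ for all s ∈ S, and suppose Γ = R ⋊ S is finitely generated. Then there exists a finitely supported, generating, Λ-absorbing probability measure τ on Γ of the split form τ(r, s) = κ_s(r)ι(s), where ι is a probability measure on S and each κ_s is a probability measure on R. -/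
open scoped ENNReal

/-- Multiplication of the semidirect product `Γ = R ⋊ S`, realized on the carrier
`R × S`: `(r,s)(r',s') = (r + s r', s s')`. -/
def affMul {R : Type*} [Ring R] (S : Subgroup Rˣ) (a b : R × S) : R × S :=
  (a.1 + ((a.2 : Rˣ) : R) * b.1, a.2 * b.2)

/-- Inversion in `Γ = R ⋊ S`: `(r,s)⁻¹ = (-(s⁻¹ r), s⁻¹)`. -/
def affInv {R : Type*} [Ring R] (S : Subgroup Rˣ) (a : R × S) : R × S :=
  (-((((a.2⁻¹ : S) : Rˣ) : R) * a.1), a.2⁻¹)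

section Aux

variable {R : Type*} [Ring R] {S : Subgroup Rˣ} (U : AddSubgroup R)

lemma affInv_affInv (a : R × S) : affInv S (affInv S a) = a := by
  obtain ⟨r, s⟩ := a
  simp [affInv, mul_neg, ← mul_assoc, ← Units.val_mul]

private lemma sub_helper {G : Type*} [AddCommGroup G] {a b c d : G}
    (h : a + b = c + d) : d - b = a - c := by
  have h2 : d - b = (c + d) - (c + b) := by abel
  rw [h2, ← h]; abel

lemma affInv_affMul (a b : R × S) :
    affInv S (affMul S a b) = affMul S (affInv S b) (affInv S a) := by
  obtain ⟨r, s⟩ := a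
  obtain ⟨r', s'⟩ := b
  have key : (s'⁻¹ * s⁻¹ * s : S) = s'⁻¹ := by rw [mul_assoc, inv_mul_cancel, mul_one]
  simp only [affInv, affMul, Prod.mk.injEq, mul_inv_rev]
  refine ⟨?_, trivial⟩
  simp only [mul_add, mul_neg, ← mul_assoc, ← Units.val_mul, ← Subgroup.coe_mul, key]
  rw [neg_add]
  abel

/-- The additive subgroup `sU ∩ U` of `R`. -/
def Nsub (s : S) : AddSubgroup R where
  carrier := {x | x ∈ U ∧ ∃ w ∈ U, x = ((s : Rˣ) : R) * w}
  zero_mem' := ⟨U.zero_mem, 0, U.zero_mem, by simp⟩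
  add_mem' := by
    rintro a b ⟨ha, w, hw, haw⟩ ⟨hb, w', hw', hbw⟩
    exact ⟨U.add_mem ha hb, w + w', U.add_mem hw hw', by rw [haw, hbw, mul_add]⟩
  neg_mem' := by
    rintro a ⟨ha, w, hw, haw⟩
    exact ⟨U.neg_mem ha, -w, U.neg_mem hw, by rw [haw, mul_neg]⟩

lemma mem_Nsub {s : S} {x : R} :
    x ∈ Nsub U s ↔ x ∈ U ∧ ∃ w ∈ U, x = ((s : Rˣ) : R) * w := Iff.rfl

/-- The quotient `U / (sU ∩ U)`. -/
abbrev QuotS (s : S) := U ⧸ ((Nsub U s).addSubgroupOf U)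

open Classical in
/-- Coset representatives, with the zero coset represented by `0`. -/
noncomputable def repQ (s : S) (q : QuotS U s) : U :=
  if q = 0 then 0 else q.out

lemma repQ_zero (s : S) : repQ U s 0 = 0 := by simp [repQ]

lemma repQ_mk (s : S) (q : QuotS U s) :
    (QuotientAddGroup.mk (repQ U s q) : QuotS U s) = q := by
  classical
  rw [repQ]
  split
  · rename_i h; rw [h]; rfl
  · exact QuotientAddGroup.out_eq' q

/-- The injection `U × U/(sU∩U) → R`, `(w, q) ↦ s w + rep q`. -/
noncomputable def fmap (s : S) (p : U × QuotS U s) : R :=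
  ((s : Rˣ) : R) * (p.1 : R) + ((repQ U s p.2 : U) : R)

lemma fmap_injective (s : S) : Function.Injective (fmap U s) := by
  rintro ⟨w, q⟩ ⟨w', q'⟩ h
  simp only [fmap] at h
  have hd : ((repQ U s q' : U) : R) - ((repQ U s q : U) : R)
      = ((s : Rˣ) : R) * ((w : R) - (w' : R)) := by
    rw [mul_sub]
    exact sub_helper h
  have hq : q = q' := by
    rw [← repQ_mk U s q, ← repQ_mk U s q']
    refine (QuotientAddGroup.eq).2 ?_
    rw [AddSubgroup.mem_addSubgroupOf]
    refine ⟨U.add_mem (U.neg_mem (repQ U s q).2) (repQ U s q').2, ((w : R) - w'),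
      U.sub_mem w.2 w'.2, ?_⟩
    push_cast
    rw [neg_add_eq_sub, hd, mul_sub]
  subst hq
  have hsw : ((s : Rˣ) : R) * (w : R) = ((s : Rˣ) : R) * (w' : R) :=
    add_right_cancel h
  have hw : ((w : R)) = (w' : R) :=
    (Units.isUnit (s : Rˣ)).mul_right_injective hsw
  exact Prod.ext (Subtype.ext hw) rfl

lemma fmap_exists (s : S) {u : R} (hu : u ∈ U) (p : U × QuotS U s) :
    ∃ p', fmap U s p' = u + fmap U s p := by
  obtain ⟨w, q⟩ := p
  have hmk : (QuotientAddGroup.mk (repQ U s (QuotientAddGroup.mk (⟨u, hu⟩ + repQ U s q)))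
      : QuotS U s) = QuotientAddGroup.mk (⟨u, hu⟩ + repQ U s q) := by rw [repQ_mk]
  have hmem := (QuotientAddGroup.eq).1 hmk
  rw [AddSubgroup.mem_addSubgroupOf] at hmem
  obtain ⟨-, w₀, hw₀U, hw₀⟩ := hmem
  refine ⟨(w + ⟨w₀, hw₀U⟩, QuotientAddGroup.mk (⟨u, hu⟩ + repQ U s q)), ?_⟩
  simp only [fmap]
  push_cast at hw₀ ⊢
  rw [mul_add, ← hw₀]
  abel

open Classical in
noncomputable def shiftMap (s : S) {u : R} (hu : u ∈ U) (p : U × QuotS U s) :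
    U × QuotS U s :=
  Classical.choose (fmap_exists U s hu p)

lemma shiftMap_spec (s : S) {u : R} (hu : u ∈ U) (p : U × QuotS U s) :
    fmap U s (shiftMap U s hu p) = u + fmap U s p :=
  Classical.choose_spec (fmap_exists U s hu p)

noncomputable def shiftEquiv (s : S) {u : R} (hu : u ∈ U) :
    U × QuotS U s ≃ U × QuotS U s where
  toFun := shiftMap U s hu
  invFun := shiftMap U s (U.neg_mem hu)
  left_inv p := fmap_injective U s (by
    rw [shiftMap_spec, shiftMap_spec]; abel)
  right_inv p := fmap_injective U s (by
    rw [shiftMap_spec, shiftMap_spec]; abel)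

lemma shiftEquiv_spec (s : S) {u : R} (hu : u ∈ U) (p : U × QuotS U s) :
    fmap U s (shiftEquiv U s hu p) = u + fmap U s p :=
  shiftMap_spec U s hu p

/-- The coset `r' + sU` is parametrized by `U`. -/
noncomputable def cosetEquiv (s : S) (r' : R) :
    U ≃ {t : R // ∃ w ∈ U, t = r' + ((s : Rˣ) : R) * w} where
  toFun w := ⟨r' + ((s : Rˣ) : R) * w, w, w.2, rfl⟩
  invFun x := ⟨(((s⁻¹ : S) : Rˣ) : R) * ((x : R) - r'), by
    obtain ⟨w, hw, hxw⟩ := x.2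
    have hx : ((x : R) - r') = ((s : Rˣ) : R) * w := by rw [hxw]; abel
    rw [hx, ← mul_assoc, ← Units.val_mul, ← Subgroup.coe_mul, inv_mul_cancel]
    simpa using hw⟩
  left_inv w := by
    ext
    simp only [add_sub_cancel_left]
    rw [← mul_assoc, ← Units.val_mul, ← Subgroup.coe_mul, inv_mul_cancel]
    simp
  right_inv x := by
    ext
    simp only []
    rw [← mul_assoc, ← Units.val_mul, ← Subgroup.coe_mul, mul_inv_cancel]
    simp

lemma cosetEquiv_apply (s : S) (r' : R) (w : U) :
    ((cosetEquiv U s r' w : R)) = r' + ((s : Rˣ) : R) * (w : R) := rfl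

lemma finite_quotS (s : S)
    (hV : ∃ V : Finset R, ∀ u ∈ U, ∃ v ∈ V,
      (u - v ∈ U ∧ ∃ w ∈ U, u - v = ((s : Rˣ) : R) * w)) :
    Finite (QuotS U s) := by
  classical
  obtain ⟨V, hV⟩ := hV
  refine Finite.of_surjective (fun v : V =>
    if hv : (v : R) ∈ U then (QuotientAddGroup.mk ⟨(v : R), hv⟩ : QuotS U s) else 0) ?_
  intro q
  obtain ⟨u, rfl⟩ := QuotientAddGroup.mk_surjective q
  obtain ⟨v, hvV, hvU, w, hwU, hw⟩ := hV u u.2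
  have hv : (v : R) ∈ U := by
    rw [← sub_sub_cancel (u : R) v]
    exact U.sub_mem u.2 hvU
  refine ⟨⟨v, hvV⟩, ?_⟩
  dsimp only
  rw [dif_pos hv]
  refine (QuotientAddGroup.eq).2 ?_
  rw [AddSubgroup.mem_addSubgroupOf]
  refine ⟨?_, w, hwU, ?_⟩
  · push_cast
    rw [neg_add_eq_sub]
    exact hvU
  · push_cast
    rw [neg_add_eq_sub]
    exact hw

end Aux

lemma tsum_uniform {α : Type*} (F : Finset α) (h : F.Nonempty) (f : α → ℝ≥0∞)
    (hf1 : ∀ a ∈ F, f a = ((F.card : ℝ≥0∞))⁻¹) (hf0 : ∀ a ∉ F, f a = 0) :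
    ∑' a : α, f a = 1 := by
  classical
  rw [tsum_eq_sum (s := F) hf0, Finset.sum_congr rfl hf1, Finset.sum_const, nsmul_eq_mul]
  exact ENNReal.mul_inv_cancel (Nat.cast_ne_zero.2 (Finset.card_pos.2 h).ne')
    (ENNReal.natCast_ne_top _)

/-- Existence of a finitely supported, generating, `Λ`-absorbing probability measure of
split form `τ(r,s) = κ_s(r) ι(s)` on `Γ = R ⋊ S`, for a countable ring `R`, a
multiplicative subgroup `S`, and an additive subgroup `U ≤ R` with `[U : sU ∩ U] < ∞` for
all `s ∈ S` (`Λ = U ⋊ {e}`), provided `Γ` is finitely generated. -/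
theorem exists_finitelySupported_generating_absorbing_split_measure
    {R : Type*} [Ring R] [Countable R] (S : Subgroup Rˣ) (U : AddSubgroup R)
    (hHecke : ∀ s : S, ∃ V : Finset R, ∀ u ∈ U, ∃ v ∈ V,
      (u - v ∈ U ∧ ∃ w ∈ U, u - v = ((s : Rˣ) : R) * w))
    (hfg : ∃ E : Finset (R × S), ∀ x : R × S, ∀ M : Set (R × S), ↑E ⊆ M →
      (∀ a ∈ M, ∀ b ∈ M, affMul S a b ∈ M) → (∀ a ∈ M, affInv S a ∈ M) → x ∈ M) :
    ∃ τ : R × S → ℝ≥0∞,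
      -- τ is a probability measure
      (∑' x : R × S, τ x = 1) ∧
      -- finitely supported
      {x : R × S | τ x ≠ 0}.Finite ∧
      -- generating: the semigroup generated by the support of τ is all of Γ
      (∀ x : R × S, ∀ M : Set (R × S), {y : R × S | τ y ≠ 0} ⊆ M →
        (∀ a ∈ M, ∀ b ∈ M, affMul S a b ∈ M) → x ∈ M) ∧
      -- Λ-absorbing: τ((u,e)(r,s)Λ) = τ((r,s)Λ) for all u ∈ U
      (∀ u ∈ U, ∀ (r : R) (s : S),
        (∑' x : {t : R // ∃ w ∈ U, t = u + r + ((s : Rˣ) : R) * w}, τ ((x : R), s)) =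
        (∑' x : {t : R // ∃ w ∈ U, t = r + ((s : Rˣ) : R) * w}, τ ((x : R), s))) ∧
      -- split form τ(r,s) = κ_s(r) ι(s)
      (∃ (ι : S → ℝ≥0∞) (κ : S → R → ℝ≥0∞),
        (∑' s : S, ι s = 1) ∧ (∀ s : S, ∑' r : R, κ s r = 1) ∧
        ∀ (r : R) (s : S), τ (r, s) = κ s r * ι s) := by
  classical
  obtain ⟨E, hE⟩ := hfg
  set E' : Finset (R × S) := (E ∪ E.image (affInv S)) ∪ {((0 : R), (1 : S))} with hE'def
  set A : Finset R := E'.image Prod.fst with hAdef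
  set B : Finset S := E'.image Prod.snd with hBdef
  have h01 : ((0 : R), (1 : S)) ∈ E' := by simp [hE'def]
  have hAne : A.Nonempty := ⟨0, Finset.mem_image_of_mem _ h01⟩
  have hBne : B.Nonempty := ⟨1, Finset.mem_image_of_mem _ h01⟩
  set κ : R → ℝ≥0∞ := fun r => if r ∈ A then ((A.card : ℝ≥0∞))⁻¹ else 0 with hκdef
  set ι : S → ℝ≥0∞ := fun s => if s ∈ B then ((B.card : ℝ≥0∞))⁻¹ else 0 with hιdef
  have hκ1 : ∑' r : R, κ r = 1 :=
    tsum_uniform A hAne κ (fun a ha => if_pos ha) (fun a ha => if_neg ha)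
  have hι1 : ∑' s : S, ι s = 1 :=
    tsum_uniform B hBne ι (fun a ha => if_pos ha) (fun a ha => if_neg ha)
  have hfin : ∀ s : S, Finite (QuotS U s) := fun s => finite_quotS U s (hHecke s)
  set κ' : S → R → ℝ≥0∞ := fun s t =>
    (Nat.card (QuotS U s) : ℝ≥0∞)⁻¹ * ∑' q : QuotS U s, κ (t + (repQ U s q : R)) with hκ'def
  have hn0 : ∀ s : S, (Nat.card (QuotS U s) : ℝ≥0∞) ≠ 0 := fun s => by
    haveI := hfin s
    exact_mod_cast Nat.card_pos.ne'
  have hnt : ∀ s : S, (Nat.card (QuotS U s) : ℝ≥0∞) ≠ ⊤ := fun s => ENNReal.natCast_ne_top _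
  have htrans : ∀ a : R, ∑' t : R, κ (t + a) = 1 := fun a => by
    rw [← hκ1]
    simpa using Equiv.tsum_eq (Equiv.addRight a) κ
  have hκ'1 : ∀ s : S, ∑' t : R, κ' s t = 1 := by
    intro s
    haveI := hfin s
    haveI := Fintype.ofFinite (QuotS U s)
    simp only [hκ'def]
    rw [ENNReal.tsum_mul_left, ENNReal.tsum_comm]
    rw [tsum_congr (fun q : QuotS U s => htrans (repQ U s q : R))]
    rw [tsum_eq_sum (s := (Finset.univ : Finset (QuotS U s))) (by simp)]
    rw [Finset.sum_const, Finset.card_univ, nsmul_eq_mul, mul_one,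
      ← Nat.card_eq_fintype_card]
    exact ENNReal.inv_mul_cancel (hn0 s) (hnt s)
  set τ : R × S → ℝ≥0∞ := fun x => κ' x.2 x.1 * ι x.2 with hτdef
  refine ⟨τ, ?_, ?_, ?_, ?_, ι, κ', hι1, hκ'1, fun r s => rfl⟩
  · -- probability
    rw [ENNReal.tsum_prod', ENNReal.tsum_comm]
    have : ∀ s : S, ∑' r : R, τ (r, s) = ι s := fun s => by
      simp only [hτdef]
      rw [ENNReal.tsum_mul_right, hκ'1 s, one_mul]
    rw [tsum_congr this, hι1]
  · -- finite support
    have hsub : {x : R × S | τ x ≠ 0} ⊆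
        (⋃ s ∈ (B : Set S), {r : R | κ' s r ≠ 0}) ×ˢ (B : Set S) := by
      rintro ⟨r, s⟩ hx
      have h1 : κ' s r ≠ 0 := fun h => hx (by simp [hτdef, h])
      have h2 : ι s ≠ 0 := fun h => hx (by simp [hτdef, h])
      have hsB : s ∈ B := by
        by_contra hsB
        exact h2 (if_neg hsB)
      exact ⟨Set.mem_biUnion hsB h1, hsB⟩
    refine Set.Finite.subset (Set.Finite.prod ?_ B.finite_toSet) hsub
    refine Set.Finite.biUnion B.finite_toSet fun s _ => ?_
    haveI := hfin s
    refine Set.Finite.subset (Set.finite_iUnion fun q : QuotS U s =>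
      A.finite_toSet.image fun a => a - (repQ U s q : R)) ?_
    intro r hr
    have hsum : ∑' q : QuotS U s, κ (r + (repQ U s q : R)) ≠ 0 := fun h =>
      hr (by simp [hκ'def, h])
    rw [Ne, ENNReal.tsum_eq_zero] at hsum
    push_neg at hsum
    obtain ⟨q, hq⟩ := hsum
    have hrA : r + (repQ U s q : R) ∈ A := by
      by_contra hA'
      exact hq (if_neg hA')
    exact Set.mem_iUnion.2 ⟨q, ⟨r + (repQ U s q : R), hrA, add_sub_cancel_right r _⟩⟩
  · -- generating
    have hE'supp : (E' : Set (R × S)) ⊆ {y : R × S | τ y ≠ 0} := by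
      rintro ⟨r, s⟩ hmem
      have hrA : r ∈ A := Finset.mem_image_of_mem Prod.fst hmem
      have hsB : s ∈ B := Finset.mem_image_of_mem Prod.snd hmem
      have hι0 : ι s ≠ 0 := by
        simp only [hιdef, if_pos hsB]
        exact ENNReal.inv_ne_zero.2 (ENNReal.natCast_ne_top _)
      have hκ'0 : κ' s r ≠ 0 := by
        haveI := hfin s
        simp only [hκ'def]
        refine mul_ne_zero (ENNReal.inv_ne_zero.2 (hnt s)) ?_
        rw [Ne, ENNReal.tsum_eq_zero]
        push_neg
        refine ⟨0, ?_⟩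
        rw [repQ_zero]
        simp only [ZeroMemClass.coe_zero, add_zero, hκdef, if_pos hrA]
        exact ENNReal.inv_ne_zero.2 (ENNReal.natCast_ne_top _)
      exact mul_ne_zero hκ'0 hι0
    intro x M hM hmul
    have main := hE x {a ∈ M | affInv S a ∈ M} ?_ ?_ ?_
    · exact main.1
    · intro a ha
      have haE' : a ∈ E' := by
        simp only [hE'def, Finset.mem_union]
        exact Or.inl (Or.inl ha)
      have hinvE' : affInv S a ∈ E' := by
        simp only [hE'def, Finset.mem_union]
        exact Or.inl (Or.inr (Finset.mem_image_of_mem _ ha))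
      exact ⟨hM (hE'supp haE'), hM (hE'supp hinvE')⟩
    · rintro a ⟨haM, haI⟩ b ⟨hbM, hbI⟩
      refine ⟨hmul a haM b hbM, ?_⟩
      rw [affInv_affMul]
      exact hmul _ hbI _ haI
    · rintro a ⟨haM, haI⟩
      exact ⟨haI, by rw [affInv_affInv]; exact haM⟩
  · -- absorbing
    intro u hu r s
    haveI := hfin s
    have key : ∀ r' : R,
        (∑' x : {t : R // ∃ w ∈ U, t = r' + ((s : Rˣ) : R) * w}, τ ((x : R), s))
        = ((Nat.card (QuotS U s) : ℝ≥0∞))⁻¹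
            * (∑' p : U × QuotS U s, κ (r' + fmap U s p)) * ι s := by
      intro r'
      rw [← Equiv.tsum_eq (cosetEquiv U s r') (fun x => τ ((x : R), s))]
      have hstep : ∀ w : U, τ ((cosetEquiv U s r' w : R), s)
          = ((Nat.card (QuotS U s) : ℝ≥0∞))⁻¹
            * (∑' q : QuotS U s, κ (r' + fmap U s ((w, q) : U × QuotS U s))) * ι s := by
        intro w
        rw [cosetEquiv_apply]
        simp only [hτdef, hκ'def]
        congr 2
        refine tsum_congr fun q => congrArg κ ?_
        simp only [fmap]
        abel
      rw [tsum_congr hstep, ENNReal.tsum_mul_right, ENNReal.tsum_mul_left,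
        ← ENNReal.tsum_prod' (f := fun p : U × QuotS U s => κ (r' + fmap U s p))]
    rw [key (u + r), key r]
    congr 2
    rw [← Equiv.tsum_eq (shiftEquiv U s hu) (fun p => κ (r + fmap U s p))]
    refine tsum_congr fun p => congrArg κ ?_
    rw [shiftEquiv_spec]
    abel
end
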